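/- arXiv:2103.10660 — 5 statements merged into one kernel-verified Lean document; each statement's English description precedes it below -/
import Mathlib

section
/- For every n ∈ ℤ and every integer i ≥ 1, Pr[A_n = i] = Σ_{r=0}^{L} C(L,r) · w_r^2 · (1 − w_r)^{i−1}. -/
/-!
Read backwards from block `n`, the blocks `c k = b (n - k)` form an i.i.d. sequence and `A n` is
its first return time to its initial value. The event `A n = i` splits, over the value `x = c 0`,
into the disjoint events `{c 0 = x, c k ≠ x for 0 < k < i, c i = x}`, each of probability
`q² (1 - q)^(i-1)` with `q = P(c k = x)` by independence. Summing over `x` and grouping the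
values by their number of ones produces the binomial coefficients.
-/

open MeasureTheory ProbabilityTheory Finset

theorem Nat.sInf_eq_iff_of_ne_zero {S : Set ℕ} {i : ℕ} (hi : i ≠ 0) :
    sInf S = i ↔ i ∈ S ∧ ∀ m < i, m ∉ S := by
  constructor
  · rintro rfl
    have hS : S.Nonempty := Set.nonempty_iff_ne_empty.2 fun h => hi (h ▸ Nat.sInf_empty)
    exact ⟨Nat.sInf_mem hS, fun m => Nat.notMem_of_lt_sInf⟩
  · rintro ⟨hiS, hlt⟩
    exact le_antisymm (Nat.sInf_le hiS) (not_lt.1 fun h => hlt _ h (Nat.sInf_mem ⟨i, hiS⟩))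

theorem Fintype.sum_card_filter_eq_sum_choose {ι M : Type*} [Fintype ι] [DecidableEq ι]
    [AddCommMonoid M] (f : ℕ → M) :
    ∑ x : ι → Bool, f #{j | x j = true} =
      ∑ r ∈ range (Fintype.card ι + 1), (Fintype.card ι).choose r • f r := by
  have h : ∑ x : ι → Bool, f #{j | x j = true} =
      ∑ s ∈ (univ : Finset ι).powerset, f #s := by
    rw [powerset_univ]
    exact sum_nbij' (fun x => ({j | x j = true} : Finset ι)) (fun s j => decide (j ∈ s))
      (by simp) (by simp) (by simp) (by simp) (by simp)
  rw [h, sum_powerset_apply_card, card_univ]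

namespace ProbabilityTheory

variable {Ω α : Type*}

def firstReturnPattern (x : α) (i k : ℕ) : Set α := if k = 0 ∨ k = i then {x} else {x}ᶜ

theorem sInf_return_eq_iff_mem_iUnion (c : ℕ → Ω → α) {i : ℕ} (hi : i ≠ 0) (ω : Ω) :
    sInf {m | 1 ≤ m ∧ c m ω = c 0 ω} = i ↔
      ω ∈ ⋃ x, ⋂ k ∈ range (i + 1), c k ⁻¹' firstReturnPattern x i k := by
  rw [Nat.sInf_eq_iff_of_ne_zero hi]
  simp only [Set.mem_iUnion, Set.mem_iInter, Set.mem_preimage, mem_range, firstReturnPattern]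
  constructor
  · rintro ⟨⟨-, hret⟩, hlt⟩
    refine ⟨c 0 ω, fun k hk => ?_⟩
    split_ifs with hk'
    · rcases hk' with rfl | rfl <;> simp [hret]
    · exact fun h => hlt k (by omega) ⟨by omega, h⟩
  · rintro ⟨x, hx⟩
    have h0 : c 0 ω = x := by simpa using hx 0 (by omega)
    have hret : c i ω = x := by simpa using hx i (by omega)
    refine ⟨⟨by omega, hret.trans h0.symm⟩, fun m hm ⟨_, hm⟩ => ?_⟩
    have := hx m (by omega)
    rw [if_neg (by omega)] at this
    exact this (hm.trans h0)

section Measure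

open scoped ENNReal

variable [MeasurableSpace Ω] [MeasurableSpace α] [MeasurableSingletonClass α]
  {μ : Measure Ω} [IsProbabilityMeasure μ] {c : ℕ → Ω → α}

theorem measurableSet_firstReturnPattern (x : α) (i k : ℕ) :
    MeasurableSet (firstReturnPattern x i k) := by
  unfold firstReturnPattern
  split_ifs
  exacts [measurableSet_singleton x, (measurableSet_singleton x).compl]

theorem prod_measure_preimage_firstReturnPattern (hc : ∀ k, Measurable (c k))
    {q : α → ℝ≥0∞} (hq : ∀ k x, μ (c k ⁻¹' {x}) = q x) (x : α) {i : ℕ} (hi : i ≠ 0) :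
    ∏ k ∈ range (i + 1), μ (c k ⁻¹' firstReturnPattern x i k) =
      q x ^ 2 * (1 - q x) ^ (i - 1) := by
  obtain ⟨j, rfl⟩ : ∃ j, i = j + 1 := ⟨i - 1, by omega⟩
  have hinner : ∀ k ∈ range j,
      μ (c (k + 1) ⁻¹' firstReturnPattern x (j + 1) (k + 1)) = 1 - q x := by
    intro k hk
    rw [firstReturnPattern, if_neg (by simp at hk; omega), Set.preimage_compl,
      prob_compl_eq_one_sub (hc _ (measurableSet_singleton x)), hq]
  rw [prod_range_succ, prod_range_succ', prod_congr rfl hinner, prod_const, card_range]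
  simp only [firstReturnPattern, true_or, or_true, if_true, hq, Nat.add_sub_cancel]
  ring

theorem measure_sInf_return_eq [Countable α] (hc : ∀ k, Measurable (c k))
    (hindep : iIndepFun c μ) {q : α → ℝ≥0∞} (hq : ∀ k x, μ (c k ⁻¹' {x}) = q x) {i : ℕ}
    (hi : i ≠ 0) :
    μ {ω | sInf {m | 1 ≤ m ∧ c m ω = c 0 ω} = i} =
      ∑' x, q x ^ 2 * (1 - q x) ^ (i - 1) := by
  have hdisj : Pairwise (Function.onFun Disjoint
      fun x => ⋂ k ∈ range (i + 1), c k ⁻¹' firstReturnPattern x i k) := by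
    intro x y hxy
    refine Set.disjoint_left.2 fun ω hx hy => hxy ?_
    simp only [Set.mem_iInter, Set.mem_preimage, mem_range, firstReturnPattern] at hx hy
    simpa using (hx 0 (by omega)).symm.trans (hy 0 (by omega))
  have hmeas : ∀ x, MeasurableSet (⋂ k ∈ range (i + 1), c k ⁻¹' firstReturnPattern x i k) :=
    fun x => .biInter (range _).countable_toSet fun k _ =>
      hc k (measurableSet_firstReturnPattern x i k)
  have hset : {ω | sInf {m | 1 ≤ m ∧ c m ω = c 0 ω} = i} =
      ⋃ x, ⋂ k ∈ range (i + 1), c k ⁻¹' firstReturnPattern x i k :=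
    Set.ext (sInf_return_eq_iff_mem_iUnion c hi)
  rw [hset, measure_iUnion hdisj hmeas]
  refine tsum_congr fun x => ?_
  rw [hindep.measure_inter_preimage_eq_mul _ fun k _ => measurableSet_firstReturnPattern x i k,
    prod_measure_preimage_firstReturnPattern hc hq x hi]

end Measure

end ProbabilityTheory

theorem ENNReal.ofReal_sq_mul_one_sub_pow {t : ℝ} (h0 : 0 ≤ t) (h1 : t ≤ 1) (j : ℕ) :
    ENNReal.ofReal t ^ 2 * (1 - ENNReal.ofReal t) ^ j = ENNReal.ofReal (t ^ 2 * (1 - t) ^ j) := by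
  rw [ENNReal.ofReal_mul (by positivity), ENNReal.ofReal_pow h0, ENNReal.ofReal_pow (by linarith),
    ENNReal.ofReal_sub _ h0, ENNReal.ofReal_one]

theorem stmt1_general
    {Ω : Type*} [MeasurableSpace Ω] (μ : Measure Ω) [IsProbabilityMeasure μ]
    (p : ℝ) (hp0 : 0 < p) (hp1 : p < 1) (L : ℕ)
    (b : ℤ → Ω → (Fin L → Bool)) (hb : ∀ n, Measurable (b n))
    (hindep : iIndepFun b μ)
    (hdist : ∀ (n : ℤ) (x : Fin L → Bool),
      μ (b n ⁻¹' {x}) =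
        ENNReal.ofReal
          (p ^ (Finset.univ.filter fun i => x i = true).card *
            (1 - p) ^ (L - (Finset.univ.filter fun i => x i = true).card)))
    (A : ℤ → Ω → ℕ)
    (hA : ∀ n ω, A n ω = sInf {m : ℕ | 1 ≤ m ∧ b (n - (m : ℤ)) ω = b n ω})
    (w : ℕ → ℝ) (hw : ∀ r, w r = p ^ r * (1 - p) ^ (L - r)) :
    ∀ (n : ℤ) (i : ℕ), 1 ≤ i →
      μ {ω | A n ω = i} =
        ENNReal.ofReal
          (∑ r ∈ Finset.range (L + 1),
            (L.choose r : ℝ) * (w r) ^ 2 * (1 - w r) ^ (i - 1)) := by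
  intro n i hi
  have hq0 : 0 ≤ 1 - p := by linarith
  have hw0 : ∀ r, 0 ≤ w r := fun r =>
    hw r ▸ mul_nonneg (pow_nonneg hp0.le _) (pow_nonneg hq0 _)
  have hw1 : ∀ r, w r ≤ 1 := fun r => hw r ▸
    mul_le_one₀ (pow_le_one₀ hp0.le hp1.le) (pow_nonneg hq0 _) (pow_le_one₀ hq0 (by linarith))
  have hA' : ∀ ω, A n ω = sInf {m : ℕ | 1 ≤ m ∧ b (n - m) ω = b (n - (0 : ℕ)) ω} := by
    simp [hA]
  simp only [hA']
  rw [measure_sInf_return_eq (c := fun k : ℕ => b (n - k)) (fun k => hb _)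
    (hindep.precomp fun k l h => by simpa using h)
    (q := fun x => ENNReal.ofReal (w #{j | x j = true})) (fun k x => by rw [hdist, hw])
    (by omega), tsum_fintype]
  simp only [ENNReal.ofReal_sq_mul_one_sub_pow (hw0 _) (hw1 _)]
  rw [← ENNReal.ofReal_sum_of_nonneg fun x _ =>
    mul_nonneg (sq_nonneg _) (pow_nonneg (sub_nonneg.2 (hw1 _)) _)]
  simp only [Fintype.sum_card_filter_eq_sum_choose (fun r => w r ^ 2 * (1 - w r) ^ (i - 1)),
    Fintype.card_fin, nsmul_eq_mul, mul_assoc]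

/-- For every `n : ℤ` and every integer `i ≥ 1`,
`Pr[A n = i] = ∑_{r=0}^{L} C(L,r) · w r ^ 2 · (1 - w r) ^ (i-1)`. -/
theorem stmt1
    {Ω : Type*} [MeasurableSpace Ω] (μ : Measure Ω) [IsProbabilityMeasure μ]
    (p : ℝ) (hp0 : 0 < p) (hp1 : p < 1) (L : ℕ) (hL : 1 ≤ L)
    (b : ℤ → Ω → (Fin L → Bool)) (hb : ∀ n, Measurable (b n))
    (hindep : iIndepFun b μ)
    (hdist : ∀ (n : ℤ) (x : Fin L → Bool),
      μ (b n ⁻¹' {x}) =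
        ENNReal.ofReal
          (p ^ (Finset.univ.filter fun i => x i = true).card *
            (1 - p) ^ (L - (Finset.univ.filter fun i => x i = true).card)))
    (A : ℤ → Ω → ℕ)
    (hA : ∀ n ω, A n ω = sInf {m : ℕ | 1 ≤ m ∧ b (n - (m : ℤ)) ω = b n ω})
    (w : ℕ → ℝ) (hw : ∀ r, w r = p ^ r * (1 - p) ^ (L - r)) :
    ∀ (n : ℤ) (i : ℕ), 1 ≤ i →
      μ {ω | A n ω = i} =
        ENNReal.ofReal
          (∑ r ∈ Finset.range (L + 1),
            (L.choose r : ℝ) * (w r) ^ 2 * (1 - w r) ^ (i - 1)) :=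
  stmt1_general μ p hp0 hp1 L b hb hindep hdist A hA w hw
end

section
/- For every n ∈ ℤ and integers i ≥ 1 and k ≥ 1, Pr[A_n = i, A_{n+k} = k] = Σ_{r=0}^{L} C(L,r) · w_r^3 · (1 − w_r)^{i+k−2}. -/
/-!
Both events are read off the blocks at the finitely many times `n - i, …, n + k`: the
event `A n = i ∧ A (n + k) = k` says that for `x = b n` the blocks at `n - i`, `n`, `n + k`
equal `x` while the `i + k - 2` blocks strictly between these times differ from `x`.
Splitting according to the value `x` and using independence, each value contributes
`w^3 (1 - w)^(i+k-2)` with `w` the probability of `x`, and `w` depends only on the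
number `r` of ones in `x`, which is shared by `C(L, r)` values.
-/

open MeasureTheory ProbabilityTheory Finset

theorem Nat.sInf_eq_iff {s : Set ℕ} {j : ℕ} (hj : j ≠ 0) :
    sInf s = j ↔ j ∈ s ∧ ∀ m < j, m ∉ s := by
  constructor
  · rintro rfl
    exact ⟨Nat.sInf_mem (Nat.nonempty_of_pos_sInf (Nat.pos_of_ne_zero hj)),
      fun m hm => Nat.notMem_of_lt_sInf hm⟩
  · rintro ⟨hjs, hmin⟩
    exact IsLeast.csInf_eq ⟨hjs, fun m hm => not_lt.1 fun hlt => hmin m hlt hm⟩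

theorem sInf_lookback_eq_iff {α : Type*} (f : ℤ → α) (n : ℤ) {j : ℕ} (hj : 1 ≤ j) :
    sInf {m : ℕ | 1 ≤ m ∧ f (n - m) = f n} = j ↔
      f (n - j) = f n ∧ ∀ t ∈ Ioo (n - j) n, f t ≠ f n := by
  rw [Nat.sInf_eq_iff (by omega)]
  simp only [Set.mem_ofPred_eq, hj, true_and, not_and, mem_Ioo, and_congr_right_iff]
  intro _
  constructor
  · rintro h t ⟨hlo, hhi⟩
    obtain ⟨m, hm⟩ : ∃ m : ℕ, n - t = m := ⟨(n - t).toNat, by omega⟩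
    have := h m (by omega) (by omega)
    rwa [← hm, sub_sub_cancel] at this
  · intro h m hmj hm
    exact h (n - m) ⟨by omega, by omega⟩

theorem sInf_lookback_eq_and_eq_iff {α : Type*} (f : ℤ → α) (n : ℤ) {i k : ℕ}
    (hi : 1 ≤ i) (hk : 1 ≤ k) :
    (sInf {m : ℕ | 1 ≤ m ∧ f (n - m) = f n} = i ∧
        sInf {m : ℕ | 1 ≤ m ∧ f (n + k - m) = f (n + k)} = k) ↔
      (∀ t ∈ ({n - i, n, n + k} : Finset ℤ), f t = f n) ∧
        ∀ t ∈ Ioo (n - i) n ∪ Ioo n (n + k), f t ≠ f n := by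
  rw [sInf_lookback_eq_iff f n hi, sInf_lookback_eq_iff f (n + k) hk, add_sub_cancel_right]
  simp only [mem_insert, mem_singleton, mem_union, forall_eq_or_imp, forall_eq]
  constructor
  · rintro ⟨⟨hi, hi'⟩, hk, hk'⟩
    exact ⟨⟨hi, trivial, hk.symm⟩, fun t ht => ht.elim (hi' t) fun ht => hk ▸ hk' t ht⟩
  · rintro ⟨⟨hi, -, hk⟩, h⟩
    exact ⟨⟨hi, fun t ht => h t (.inl ht)⟩, hk.symm, fun t ht => hk ▸ h t (.inr ht)⟩

theorem card_sub_self_add_eq_three (n : ℤ) {i k : ℕ} (hi : 1 ≤ i) (hk : 1 ≤ k) :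
    #({n - i, n, n + k} : Finset ℤ) = 3 := by
  rw [card_insert_of_notMem (by simp; omega), card_pair (by omega)]

theorem card_Ioo_sub_union_Ioo_add (n : ℤ) {i k : ℕ} (hi : 1 ≤ i) (hk : 1 ≤ k) :
    #(Ioo (n - i) n ∪ Ioo n (n + k)) = i + k - 2 := by
  rw [card_union_of_disjoint (disjoint_left.2 fun t h h' => by simp at h h'; omega),
    Int.card_Ioo, Int.card_Ioo]
  omega

section PatternEvent

variable {Ω ι β : Type*}

def patternEvent (b : ι → Ω → β) (S D : Finset ι) (x : β) : Set Ω :=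
  (⋂ t ∈ S, b t ⁻¹' {x}) ∩ ⋂ t ∈ D, b t ⁻¹' {x}ᶜ

theorem mem_patternEvent {b : ι → Ω → β} {S D : Finset ι} {x : β} {ω : Ω} :
    ω ∈ patternEvent b S D x ↔ (∀ t ∈ S, b t ω = x) ∧ ∀ t ∈ D, b t ω ≠ x := by
  simp [patternEvent]

variable [MeasurableSpace Ω] [MeasurableSpace β]

theorem measurableSet_patternEvent [MeasurableSingletonClass β] {b : ι → Ω → β}
    (hb : ∀ t, Measurable (b t)) (S D : Finset ι) (x : β) :
    MeasurableSet (patternEvent b S D x) :=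
  (S.measurableSet_biInter fun t _ => hb t (measurableSet_singleton x)).inter
    (D.measurableSet_biInter fun t _ => hb t (measurableSet_singleton x).compl)

theorem measure_patternEvent [MeasurableSingletonClass β] {μ : Measure Ω}
    [IsProbabilityMeasure μ] {b : ι → Ω → β} (hb : ∀ t, Measurable (b t))
    (hindep : iIndepFun b μ) {S D : Finset ι} (hSD : Disjoint S D) {x : β} {q : ENNReal}
    (hq : ∀ t, μ (b t ⁻¹' {x}) = q) :
    μ (patternEvent b S D x) = q ^ #S * (1 - q) ^ #D := by
  classical
  let pattern : ι → Set β := fun t => if t ∈ S then {x} else {x}ᶜ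
  have hevent : patternEvent b S D x = ⋂ t ∈ S ∪ D, b t ⁻¹' pattern t := by
    ext ω
    simp only [mem_patternEvent, Set.mem_iInter, mem_union, Set.mem_preimage, pattern]
    constructor
    · rintro ⟨hS, hD⟩ t (ht | ht)
      · simpa [ht] using hS t ht
      · simpa [disjoint_right.1 hSD ht] using hD t ht
    · intro h
      refine ⟨fun t ht => by simpa [ht] using h t (.inl ht), fun t ht => ?_⟩
      simpa [disjoint_right.1 hSD ht] using h t (.inr ht)
  have hcompl : ∀ t, μ (b t ⁻¹' {x}ᶜ) = 1 - q := fun t => by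
    rw [Set.preimage_compl, prob_compl_eq_one_sub (hb t (measurableSet_singleton x)), hq]
  rw [hevent, hindep.measure_inter_preimage_eq_mul _ fun t _ => by
      by_cases ht : t ∈ S <;> simp [pattern, ht],
    prod_union hSD,
    prod_congr rfl fun t ht => show μ (b t ⁻¹' pattern t) = q by
      simp only [pattern, if_pos ht, hq],
    prod_congr rfl fun t ht => show μ (b t ⁻¹' pattern t) = 1 - q by
      simp only [pattern, if_neg (disjoint_right.1 hSD ht), hcompl],
    prod_const, prod_const]

end PatternEvent

theorem ENNReal.ofReal_pow_mul_one_sub_ofReal_pow {a : ℝ} (ha₀ : 0 ≤ a) (ha₁ : a ≤ 1)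
    (m l : ℕ) :
    ENNReal.ofReal a ^ m * (1 - ENNReal.ofReal a) ^ l = ENNReal.ofReal (a ^ m * (1 - a) ^ l) := by
  rw [← ENNReal.ofReal_one, ← ENNReal.ofReal_sub _ ha₀, ← ENNReal.ofReal_pow ha₀,
    ← ENNReal.ofReal_pow (sub_nonneg.2 ha₁), ← ENNReal.ofReal_mul (pow_nonneg ha₀ _)]

theorem sum_fun_bool_eq_sum_choose {ι M : Type*} [Fintype ι] [DecidableEq ι] [AddCommMonoid M]
    (g : ℕ → M) :
    ∑ x : ι → Bool, g #{j | x j = true} =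
      ∑ r ∈ range (Fintype.card ι + 1), (Fintype.card ι).choose r • g r := by
  rw [← card_univ, ← sum_powerset_apply_card]
  refine sum_nbij' (fun x => ({j | x j = true} : Finset ι)) (fun s j => decide (j ∈ s))
    ?_ ?_ ?_ ?_ ?_ <;> intros <;> simp

theorem stmt3_general
    {Ω : Type*} [MeasurableSpace Ω] (μ : Measure Ω) [IsProbabilityMeasure μ]
    (p : ℝ) (hp0 : 0 < p) (hp1 : p < 1) (L : ℕ)
    (b : ℤ → Ω → (Fin L → Bool)) (hb : ∀ n, Measurable (b n))
    (hindep : iIndepFun b μ)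
    (hdist : ∀ (n : ℤ) (x : Fin L → Bool),
      μ (b n ⁻¹' {x}) =
        ENNReal.ofReal
          (p ^ (Finset.univ.filter fun i => x i = true).card *
            (1 - p) ^ (L - (Finset.univ.filter fun i => x i = true).card)))
    (A : ℤ → Ω → ℕ)
    (hA : ∀ n ω, A n ω = sInf {m : ℕ | 1 ≤ m ∧ b (n - (m : ℤ)) ω = b n ω})
    (w : ℕ → ℝ) (hw : ∀ r, w r = p ^ r * (1 - p) ^ (L - r)) :
    ∀ (n : ℤ) (i k : ℕ), 1 ≤ i → 1 ≤ k →
      μ ({ω | A n ω = i} ∩ {ω | A (n + (k : ℤ)) ω = k}) =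
        ENNReal.ofReal
          (∑ r ∈ Finset.range (L + 1),
            (L.choose r : ℝ) * (w r) ^ 3 * (1 - w r) ^ (i + k - 2)) := by
  intro n i k hi hk
  have hw_nonneg r : 0 ≤ w r :=
    hw r ▸ mul_nonneg (pow_nonneg hp0.le _) (pow_nonneg (by linarith) _)
  have hw_le_one r : w r ≤ 1 := hw r ▸
    mul_le_one₀ (pow_le_one₀ hp0.le hp1.le) (by positivity)
      (pow_le_one₀ (by linarith) (by linarith))
  set S : Finset ℤ := {n - i, n, n + k}
  set D : Finset ℤ := Ioo (n - i) n ∪ Ioo n (n + k)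
  have hevent :
      {ω | A n ω = i} ∩ {ω | A (n + (k : ℤ)) ω = k} = ⋃ x, patternEvent b S D x := by
    ext ω
    simp only [Set.mem_inter_iff, Set.mem_ofPred_eq, Set.mem_iUnion, mem_patternEvent, hA]
    rw [sInf_lookback_eq_and_eq_iff (b · ω) n hi hk]
    exact ⟨fun h => ⟨b n ω, h⟩, fun ⟨x, hS, hD⟩ => by
      obtain rfl : b n ω = x := hS n (by simp [S])
      exact ⟨hS, hD⟩⟩
  have hdisj : Pairwise (Function.onFun Disjoint (patternEvent b S D)) :=
    fun x y hxy => Set.disjoint_left.2 fun ω hx hy =>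
      hxy ((mem_patternEvent.1 hx).1 n (by simp [S]) ▸ (mem_patternEvent.1 hy).1 n (by simp [S]))
  have hSD : Disjoint S D := disjoint_left.2 fun t hS hD => by simp [S, D] at hS hD; omega
  have hblock t x : μ (b t ⁻¹' {x}) = ENNReal.ofReal (w #{j | x j = true}) := by rw [hdist, hw]
  rw [hevent, measure_iUnion hdisj (measurableSet_patternEvent hb S D), tsum_fintype,
    sum_congr rfl fun x _ => measure_patternEvent hb hindep hSD (hblock · x),
    card_sub_self_add_eq_three n hi hk, card_Ioo_sub_union_Ioo_add n hi hk,
    sum_congr rfl fun x _ =>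
      ENNReal.ofReal_pow_mul_one_sub_ofReal_pow (hw_nonneg _) (hw_le_one _) _ _,
    sum_fun_bool_eq_sum_choose fun r => ENNReal.ofReal (w r ^ 3 * (1 - w r) ^ (i + k - 2)),
    Fintype.card_fin, ENNReal.ofReal_sum_of_nonneg fun r _ =>
      mul_nonneg (mul_nonneg (Nat.cast_nonneg _) (pow_nonneg (hw_nonneg r) _))
        (pow_nonneg (sub_nonneg.2 (hw_le_one r)) _)]
  refine sum_congr rfl fun r _ => ?_
  rw [nsmul_eq_mul, ← ENNReal.ofReal_natCast, ← ENNReal.ofReal_mul (Nat.cast_nonneg _),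
    mul_assoc]

/-- For every `n : ℤ` and integers `i ≥ 1` and `k ≥ 1`,
`Pr[A n = i, A (n+k) = k] = ∑_{r=0}^{L} C(L,r) · w r ^ 3 · (1 - w r) ^ (i+k-2)`. -/
theorem stmt3
    {Ω : Type*} [MeasurableSpace Ω] (μ : Measure Ω) [IsProbabilityMeasure μ]
    (p : ℝ) (hp0 : 0 < p) (hp1 : p < 1) (L : ℕ) (hL : 1 ≤ L)
    (b : ℤ → Ω → (Fin L → Bool)) (hb : ∀ n, Measurable (b n))
    (hindep : iIndepFun b μ)
    (hdist : ∀ (n : ℤ) (x : Fin L → Bool),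
      μ (b n ⁻¹' {x}) =
        ENNReal.ofReal
          (p ^ (Finset.univ.filter fun i => x i = true).card *
            (1 - p) ^ (L - (Finset.univ.filter fun i => x i = true).card)))
    (A : ℤ → Ω → ℕ)
    (hA : ∀ n ω, A n ω = sInf {m : ℕ | 1 ≤ m ∧ b (n - (m : ℤ)) ω = b n ω})
    (w : ℕ → ℝ) (hw : ∀ r, w r = p ^ r * (1 - p) ^ (L - r)) :
    ∀ (n : ℤ) (i k : ℕ), 1 ≤ i → 1 ≤ k →
      μ ({ω | A n ω = i} ∩ {ω | A (n + (k : ℤ)) ω = k}) =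
        ENNReal.ofReal
          (∑ r ∈ Finset.range (L + 1),
            (L.choose r : ℝ) * (w r) ^ 3 * (1 - w r) ^ (i + k - 2)) :=
  stmt3_general μ p hp0 hp1 L b hb hindep hdist A hA w hw
end

section
/- For every n ∈ ℤ and integers i ≥ 1, k ≥ 1 and j with k+1 ≤ j ≤ k+i−1, one has Pr[A_n = i, A_{n+k} = j] = Σ_{r1=0}^{L} Σ_{r2=0, r2≠r1}^{L} C(L,r1) C(L,r2) h(r1,r2) + Σ_{r=0}^{L} C(L,r)(C(L,r)−1) h(r,r), where h(r1,r2) = w_{r1}^2 w_{r2}^2 (1−w_{r1})^{i−j+k−1} (1−w_{r1}−w_{r2})^{j−k−1} (1−w_{r2})^{k−1}. -/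
/-!
Split the event according to the values `x = b n` and `y = b (n + k)`. Because `k < j`, the
return of `b (n + k)` passes over block `n`, which forces `x ≠ y`. For `x ≠ y` the event says
exactly that, on the window `[n - i, n + k]`, block `t` equals `x` at `n - i` and `n`, equals `y`
at `n + k - j` and `n + k`, avoids `x` on `(n - i, n + k - j)`, avoids both values on
`(n + k - j, n)` and avoids `y` on `(n, n + k)`. By independence its probability is the product
`h (#x) (#y)` of the single-block probabilities, `#x` being the number of ones of `x`; grouping the
pairs `(x, y)` by `(#x, #y)` produces the binomial coefficients.
-/

open MeasureTheory ProbabilityTheory Finset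

section Counting

variable {L : ℕ}

def onesCount (z : Fin L → Bool) : ℕ := #{i | z i = true}

lemma sum_onesCount {M : Type*} [AddCommMonoid M] (f : ℕ → M) :
    ∑ z : Fin L → Bool, f (onesCount z) = ∑ r ∈ range (L + 1), L.choose r • f r := by
  have h := sum_powerset_apply_card f (x := (univ : Finset (Fin L)))
  rw [card_univ, Fintype.card_fin] at h
  rw [← h]
  exact sum_nbij' (fun z => ({i | z i = true} : Finset (Fin L))) (fun s i => decide (i ∈ s))
    (by simp) (by simp) (fun z _ => by funext i; simp) (fun s _ => by ext; simp) (fun _ _ => rfl)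

lemma sum_sum_erase_onesCount (F : ℕ → ℕ → ℝ) :
    ∑ x : Fin L → Bool, ∑ y ∈ univ.erase x, F (onesCount x) (onesCount y) =
      (∑ r1 ∈ range (L + 1), ∑ r2 ∈ (range (L + 1)).erase r1,
          (L.choose r1 : ℝ) * (L.choose r2 : ℝ) * F r1 r2) +
        ∑ r ∈ range (L + 1), (L.choose r : ℝ) * ((L.choose r : ℝ) - 1) * F r r := by
  have hrow : ∀ r1 ∈ range (L + 1), ∑ r2 ∈ (range (L + 1)).erase r1,
      (L.choose r1 : ℝ) * (L.choose r2 : ℝ) * F r1 r2 =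
        ∑ r2 ∈ range (L + 1), (L.choose r1 : ℝ) * (L.choose r2 : ℝ) * F r1 r2 -
          (L.choose r1 : ℝ) * (L.choose r1 : ℝ) * F r1 r1 :=
    fun r1 hr1 => sum_erase_eq_sub hr1
  simp_rw [sum_congr rfl hrow, sum_erase_eq_sub (mem_univ _), sum_sub_distrib,
    sum_onesCount (fun r => F r r),
    sum_onesCount (fun r1 => ∑ y : Fin L → Bool, F r1 (onesCount y)), sum_onesCount (F _),
    nsmul_eq_mul, mul_sum, mul_assoc]
  rw [sub_add]
  congr 1
  rw [← sum_sub_distrib]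
  exact sum_congr rfl fun r _ => by ring

end Counting

section ReturnTime

variable {Ω α : Type*} (b : ℤ → Ω → α)

noncomputable def returnTime (n : ℤ) (ω : Ω) : ℕ := sInf {m : ℕ | 1 ≤ m ∧ b (n - m) ω = b n ω}

lemma returnTime_eq_iff {n : ℤ} {ω : Ω} {i : ℕ} (hi : 1 ≤ i) :
    returnTime b n ω = i ↔
      b (n - i) ω = b n ω ∧ ∀ m : ℕ, 1 ≤ m → m < i → b (n - m) ω ≠ b n ω := by
  constructor
  · intro h
    have hne := Nat.nonempty_of_pos_sInf (show 0 < returnTime b n ω by omega)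
    obtain ⟨⟨-, hret⟩, hmin⟩ := (csInf_eq_iff hne i).1 h
    exact ⟨hret, fun m hm hmi heq => (hmin m ⟨hm, heq⟩).not_gt hmi⟩
  · rintro ⟨hret, hfirst⟩
    refine (csInf_eq_iff (s := {m : ℕ | 1 ≤ m ∧ b (n - m) ω = b n ω}) ⟨i, hi, hret⟩ i).2
      ⟨⟨hi, hret⟩, fun m ⟨hm, heq⟩ => not_lt.1 fun hmi => hfirst m hm hmi heq⟩

lemma returnTime_add_le {n : ℤ} {ω : Ω} {k : ℕ} (hk : 1 ≤ k) (h : b n ω = b (n + k) ω) :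
    returnTime b (n + k) ω ≤ k :=
  Nat.sInf_le (s := {m : ℕ | 1 ≤ m ∧ b (n + k - m) ω = b (n + k) ω})
    ⟨hk, by rwa [add_sub_cancel_right]⟩

variable {b}

def returnConstraint (x : α) (a n t : ℤ) : Set α :=
  if t = a ∨ t = n then {x} else if a < t ∧ t < n then {x}ᶜ else Set.univ

section returnConstraint

variable {x : α} {a n t : ℤ}

lemma returnConstraint_left : returnConstraint x a n a = {x} := if_pos (.inl rfl)

lemma returnConstraint_right : returnConstraint x a n n = {x} := if_pos (.inr rfl)

lemma returnConstraint_of_mem_Ioo (hat : a < t) (htn : t < n) :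
    returnConstraint x a n t = {x}ᶜ := by
  rw [returnConstraint, if_neg (by omega), if_pos ⟨hat, htn⟩]

lemma returnConstraint_of_lt (han : a ≤ n) (hta : t < a) :
    returnConstraint x a n t = Set.univ := by
  rw [returnConstraint, if_neg (by omega), if_neg (by omega)]

lemma returnConstraint_of_gt (han : a ≤ n) (hnt : n < t) :
    returnConstraint x a n t = Set.univ := by
  rw [returnConstraint, if_neg (by omega), if_neg (by omega)]

lemma measurableSet_returnConstraint [MeasurableSpace α] [MeasurableSingletonClass α] :
    MeasurableSet (returnConstraint x a n t) := by
  unfold returnConstraint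
  split_ifs
  exacts [.singleton x, (MeasurableSet.singleton x).compl, .univ]

lemma returnConstraint_inter_of_notMem_Icc {y : α} {c d : ℤ} (hac : a ≤ c) (hcn : c ≤ n)
    (hnd : n ≤ d) (ht : t ∉ Icc a d) :
    returnConstraint x a n t ∩ returnConstraint y c d t = Set.univ := by
  rw [mem_Icc, not_and_or, not_le, not_le] at ht
  rcases ht with hta | hdt
  · rw [returnConstraint_of_lt (by omega) hta, returnConstraint_of_lt (by omega) (by omega),
      Set.inter_univ]
  · rw [returnConstraint_of_gt (by omega) (by omega), returnConstraint_of_gt (by omega) hdt,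
      Set.inter_univ]

end returnConstraint

lemma returnTime_inter_preimage_eq_iInter (n : ℤ) {i : ℕ} (hi : 1 ≤ i) (x : α) :
    {ω | returnTime b n ω = i} ∩ b n ⁻¹' {x} = ⋂ t, b t ⁻¹' returnConstraint x (n - i) n t := by
  ext ω
  simp only [Set.mem_inter_iff, Set.mem_ofPred_eq, Set.mem_preimage, Set.mem_singleton_iff,
    Set.mem_iInter, returnTime_eq_iff b hi]
  constructor
  · rintro ⟨⟨hret, hfirst⟩, rfl⟩ t
    unfold returnConstraint
    split_ifs with hend hmid
    · rcases hend with rfl | rfl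
      exacts [hret, rfl]
    · refine fun heq => hfirst (n - t).toNat (by omega) (by omega) ?_
      rwa [show n - ((n - t).toNat : ℤ) = t by omega]
    · trivial
  · intro h
    have hn : b n ω = x := by simpa [returnConstraint_right] using h n
    refine ⟨⟨by simpa [returnConstraint_left, hn] using h (n - i), fun m hm hmi => ?_⟩, hn⟩
    simpa [returnConstraint_of_mem_Ioo (show n - i < n - m by omega) (show n - m < n by omega),
      hn] using h (n - m)

lemma returnTime_inter_returnTime_eq_iInter (n m : ℤ) {i j : ℕ} (hi : 1 ≤ i) (hj : 1 ≤ j)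
    (x y : α) :
    {ω | returnTime b n ω = i} ∩ {ω | returnTime b m ω = j} ∩ b n ⁻¹' {x} ∩ b m ⁻¹' {y} =
      ⋂ t, b t ⁻¹' (returnConstraint x (n - i) n t ∩ returnConstraint y (m - j) m t) := by
  rw [Set.inter_assoc, Set.inter_inter_inter_comm, returnTime_inter_preimage_eq_iInter n hi x,
    returnTime_inter_preimage_eq_iInter m hj y, ← Set.iInter_inter_distrib]
  rfl

end ReturnTime

lemma prod_Ioc_eq_pow_mul {M : Type*} [CommMonoid M] (f : ℤ → M) {a c : ℤ} (hac : a < c) {v : M}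
    (hv : ∀ t, a < t → t < c → f t = v) :
    ∏ t ∈ Ioc a c, f t = v ^ (c - a - 1).toNat * f c := by
  rw [← Ioo_insert_right hac, prod_insert right_notMem_Ioo,
    prod_congr rfl fun t ht => hv t (mem_Ioo.1 ht).1 (mem_Ioo.1 ht).2, prod_const, Int.card_Ioo,
    mul_comm]

lemma prod_Icc_eq_of_eqOn_Ioo {M : Type*} [CommMonoid M] (f : ℤ → M) {a c n d : ℤ}
    (hac : a < c) (hcn : c < n) (hnd : n < d) {u v w : M}
    (hu : ∀ t, a < t → t < c → f t = u) (hv : ∀ t, c < t → t < n → f t = v)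
    (hw : ∀ t, n < t → t < d → f t = w) :
    ∏ t ∈ Icc a d, f t = f a * (u ^ (c - a - 1).toNat * f c) * (v ^ (n - c - 1).toNat * f n) *
      (w ^ (d - n - 1).toNat * f d) := by
  rw [← Ioc_insert_left (by omega), prod_insert left_notMem_Ioc,
    ← Ioc_union_Ioc_eq_Ioc hac.le (by omega : c ≤ d), prod_union (Ioc_disjoint_Ioc_of_le le_rfl),
    ← Ioc_union_Ioc_eq_Ioc hcn.le hnd.le, prod_union (Ioc_disjoint_Ioc_of_le le_rfl),
    prod_Ioc_eq_pow_mul f hac hu, prod_Ioc_eq_pow_mul f hcn hv, prod_Ioc_eq_pow_mul f hnd hw]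
  simp only [mul_assoc]

section Measure

variable {Ω α : Type*} [MeasurableSpace Ω] {μ : Measure Ω} [MeasurableSpace α]

lemma ProbabilityTheory.iIndepFun.measureReal_iInter_preimage {ι : Type*} {f : ι → Ω → α}
    (hf : iIndepFun f μ) {S : ι → Set α} (hS : ∀ i, MeasurableSet (S i)) (s : Finset ι)
    (huniv : ∀ i ∉ s, S i = Set.univ) :
    μ.real (⋂ i, f i ⁻¹' S i) = ∏ i ∈ s, μ.real (f i ⁻¹' S i) := by
  have hfin : ⋂ i, f i ⁻¹' S i = ⋂ i ∈ s, f i ⁻¹' S i := by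
    ext ω
    simp only [Set.mem_iInter, Set.mem_preimage]
    exact ⟨fun h i _ => h i, fun h i => (em (i ∈ s)).elim (h i) fun hi => by simp [huniv i hi]⟩
  rw [hfin, measureReal_def, hf.meas_biInter fun i _ => ⟨S i, hS i, rfl⟩, ENNReal.toReal_prod]
  rfl

lemma measureReal_eq_sum_inter_preimage [IsFiniteMeasure μ] [Fintype α]
    [MeasurableSingletonClass α] {f : Ω → α} (hf : Measurable f) (E : Set Ω) :
    μ.real E = ∑ x, μ.real (E ∩ f ⁻¹' {x}) := by
  have h := sum_measureReal_preimage_singleton (μ := μ.restrict E) univ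
    fun x _ => hf (measurableSet_singleton x)
  simp only [coe_univ, Set.preimage_univ, measureReal_restrict_apply_univ] at h
  rw [← h]
  refine sum_congr rfl fun x _ => ?_
  rw [measureReal_restrict_apply (hf (measurableSet_singleton x)), Set.inter_comm]

variable [IsProbabilityMeasure μ] [MeasurableSingletonClass α]

lemma measureReal_preimage_compl_finset {f : Ω → α} (hf : Measurable f) (s : Finset α) :
    μ.real (f ⁻¹' (↑s)ᶜ) = 1 - ∑ x ∈ s, μ.real (f ⁻¹' {x}) := by
  rw [Set.preimage_compl, probReal_compl_eq_one_sub (hf s.measurableSet),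
    sum_measureReal_preimage_singleton s fun y _ => hf (measurableSet_singleton y)]

end Measure

section TwoReturns

variable {Ω α : Type*} [MeasurableSpace Ω] {μ : Measure Ω} [IsProbabilityMeasure μ]
  [MeasurableSpace α] [MeasurableSingletonClass α] {b : ℤ → Ω → α}

lemma measureReal_returnTime_inter_returnTime (hb : ∀ t, Measurable (b t))
    (hindep : iIndepFun b μ) {ν : α → ℝ} (hν : ∀ t z, μ.real (b t ⁻¹' {z}) = ν z)
    (n : ℤ) {i k j : ℕ} (hk : 1 ≤ k) (hkj : k + 1 ≤ j) (hji : j ≤ k + i - 1)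
    {x y : α} (hxy : x ≠ y) :
    μ.real ({ω | returnTime b n ω = i} ∩ {ω | returnTime b (n + k) ω = j} ∩
        b n ⁻¹' {x} ∩ b (n + k) ⁻¹' {y}) =
      ν x ^ 2 * ν y ^ 2 * (1 - ν x) ^ (i + k - 1 - j) * (1 - ν x - ν y) ^ (j - k - 1) *
        (1 - ν y) ^ (k - 1) := by
  classical
  set a : ℤ := n - i
  set c : ℤ := n + k - j
  set d : ℤ := n + k
  have hac : a < c := by omega
  have hcn : c < n := by omega
  have hnd : n < d := by omega
  have hSa : returnConstraint x a n a ∩ returnConstraint y c d a = {x} := by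
    rw [returnConstraint_left, returnConstraint_of_lt (show c ≤ d by omega) hac, Set.inter_univ]
  have hSc : returnConstraint x a n c ∩ returnConstraint y c d c = {y} := by
    rw [returnConstraint_of_mem_Ioo hac hcn, returnConstraint_left]
    exact Set.inter_eq_right.2 (Set.singleton_subset_iff.2 hxy.symm)
  have hSn : returnConstraint x a n n ∩ returnConstraint y c d n = {x} := by
    rw [returnConstraint_right, returnConstraint_of_mem_Ioo hcn hnd]
    exact Set.inter_eq_left.2 (Set.singleton_subset_iff.2 hxy)
  have hSd : returnConstraint x a n d ∩ returnConstraint y c d d = {y} := by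
    rw [returnConstraint_of_gt (show a ≤ n by omega) hnd, returnConstraint_right, Set.univ_inter]
  have hcompl : ∀ t (s : Finset α), μ.real (b t ⁻¹' (↑s)ᶜ) = 1 - ∑ z ∈ s, ν z := fun t s => by
    simp only [measureReal_preimage_compl_finset (hb t), hν]
  rw [returnTime_inter_returnTime_eq_iInter n d (by omega) (by omega) x y,
    hindep.measureReal_iInter_preimage
      (fun t => measurableSet_returnConstraint.inter measurableSet_returnConstraint) _
      fun t => returnConstraint_inter_of_notMem_Icc hac.le hcn.le hnd.le,
    prod_Icc_eq_of_eqOn_Ioo _ hac hcn hnd (u := 1 - ν x) (v := 1 - ν x - ν y) (w := 1 - ν y)]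
  · rw [hSa, hSc, hSn, hSd, hν, hν, hν, hν, show (c - a - 1).toNat = i + k - 1 - j by omega,
      show (n - c - 1).toNat = j - k - 1 by omega, show (d - n - 1).toNat = k - 1 by omega]
    ring
  · intro t hat htc
    rw [returnConstraint_of_mem_Ioo hat (by omega),
      returnConstraint_of_lt (show c ≤ d by omega) htc, Set.inter_univ, ← coe_singleton, hcompl,
      sum_singleton]
  · intro t hct htn
    rw [returnConstraint_of_mem_Ioo (by omega) htn, returnConstraint_of_mem_Ioo hct (by omega),
      ← Set.compl_union, ← Set.insert_eq, ← coe_pair, hcompl, sum_pair hxy, sub_sub]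
  · intro t hnt htd
    rw [returnConstraint_of_gt (show a ≤ n by omega) hnt,
      returnConstraint_of_mem_Ioo (by omega) htd, Set.univ_inter, ← coe_singleton, hcompl,
      sum_singleton]

end TwoReturns

/-- The exponent `i - j + k - 1` is written as the natural number `i + k - 1 - j`, which agrees
with it because `j ≤ k + i - 1`. -/
theorem stmt4_general
    {Ω : Type*} [MeasurableSpace Ω] (μ : Measure Ω) [IsProbabilityMeasure μ]
    (p : ℝ) (hp0 : 0 < p) (hp1 : p < 1) (L : ℕ)
    (b : ℤ → Ω → (Fin L → Bool)) (hb : ∀ n, Measurable (b n))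
    (hindep : iIndepFun b μ)
    (hdist : ∀ (n : ℤ) (x : Fin L → Bool),
      μ (b n ⁻¹' {x}) =
        ENNReal.ofReal
          (p ^ (Finset.univ.filter fun i => x i = true).card *
            (1 - p) ^ (L - (Finset.univ.filter fun i => x i = true).card)))
    (A : ℤ → Ω → ℕ)
    (hA : ∀ n ω, A n ω = sInf {m : ℕ | 1 ≤ m ∧ b (n - (m : ℤ)) ω = b n ω})
    (w : ℕ → ℝ) (hw : ∀ r, w r = p ^ r * (1 - p) ^ (L - r)) :
    ∀ (n : ℤ) (i k j : ℕ), 1 ≤ i → 1 ≤ k → k + 1 ≤ j → j ≤ k + i - 1 →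
      ∀ h : ℕ → ℕ → ℝ,
        (∀ r1 r2, h r1 r2 =
          (w r1) ^ 2 * (w r2) ^ 2 * (1 - w r1) ^ (i + k - 1 - j) *
            (1 - w r1 - w r2) ^ (j - k - 1) * (1 - w r2) ^ (k - 1)) →
      μ ({ω | A n ω = i} ∩ {ω | A (n + (k : ℤ)) ω = j}) =
        ENNReal.ofReal
          ((∑ r1 ∈ Finset.range (L + 1), ∑ r2 ∈ (Finset.range (L + 1)).erase r1,
              (L.choose r1 : ℝ) * (L.choose r2 : ℝ) * h r1 r2) +
           ∑ r ∈ Finset.range (L + 1),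
              (L.choose r : ℝ) * ((L.choose r : ℝ) - 1) * h r r) := by
  intro n i k j _ hk hkj hji h hh
  obtain rfl : A = returnTime b := funext fun n => funext (hA n)
  have hlaw : ∀ t x, μ.real (b t ⁻¹' {x}) = w (onesCount x) := fun t x => by
    have := sub_nonneg.2 hp1.le
    rw [measureReal_def, hdist, ENNReal.toReal_ofReal (by positivity), hw]
    rfl
  set E := {ω | returnTime b n ω = i} ∩ {ω | returnTime b (n + k) ω = j}
  have hdiag : ∀ x, μ.real (E ∩ b n ⁻¹' {x} ∩ b (n + k) ⁻¹' {x}) = 0 := by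
    intro x
    convert measureReal_empty (μ := μ)
    refine Set.eq_empty_of_forall_notMem fun ω ⟨⟨⟨_, hj⟩, hx⟩, hx'⟩ => ?_
    have := returnTime_add_le b hk (hx.trans hx'.symm)
    simp only [Set.mem_ofPred_eq] at hj
    omega
  rw [← ofReal_measureReal, measureReal_eq_sum_inter_preimage (hb n), ← sum_sum_erase_onesCount]
  congr 1
  refine sum_congr rfl fun x _ => ?_
  rw [measureReal_eq_sum_inter_preimage (hb (n + k)),
    ← sum_erase (f := fun y => μ.real (E ∩ b n ⁻¹' {x} ∩ b (n + k) ⁻¹' {y})) _ (hdiag x)]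
  refine sum_congr rfl fun y hy => ?_
  rw [measureReal_returnTime_inter_returnTime hb hindep hlaw n hk hkj hji
    (ne_of_mem_erase hy).symm, hh]

/-- joint probability of `A n = i` and `A (n+k) = j` for
`k+1 ≤ j ≤ k+i-1`, with
`h r1 r2 = w r1 ^2 · w r2 ^2 · (1-w r1)^(i-j+k-1) · (1-w r1-w r2)^(j-k-1) · (1-w r2)^(k-1)`
(the exponent `i-j+k-1` is written as the natural number `i+k-1-j`). -/
theorem stmt4
    {Ω : Type*} [MeasurableSpace Ω] (μ : Measure Ω) [IsProbabilityMeasure μ]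
    (p : ℝ) (hp0 : 0 < p) (hp1 : p < 1) (L : ℕ) (hL : 1 ≤ L)
    (b : ℤ → Ω → (Fin L → Bool)) (hb : ∀ n, Measurable (b n))
    (hindep : iIndepFun b μ)
    (hdist : ∀ (n : ℤ) (x : Fin L → Bool),
      μ (b n ⁻¹' {x}) =
        ENNReal.ofReal
          (p ^ (Finset.univ.filter fun i => x i = true).card *
            (1 - p) ^ (L - (Finset.univ.filter fun i => x i = true).card)))
    (A : ℤ → Ω → ℕ)
    (hA : ∀ n ω, A n ω = sInf {m : ℕ | 1 ≤ m ∧ b (n - (m : ℤ)) ω = b n ω})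
    (w : ℕ → ℝ) (hw : ∀ r, w r = p ^ r * (1 - p) ^ (L - r)) :
    ∀ (n : ℤ) (i k j : ℕ), 1 ≤ i → 1 ≤ k → k + 1 ≤ j → j ≤ k + i - 1 →
      ∀ h : ℕ → ℕ → ℝ,
        (∀ r1 r2, h r1 r2 =
          (w r1) ^ 2 * (w r2) ^ 2 * (1 - w r1) ^ (i + k - 1 - j) *
            (1 - w r1 - w r2) ^ (j - k - 1) * (1 - w r2) ^ (k - 1)) →
      μ ({ω | A n ω = i} ∩ {ω | A (n + (k : ℤ)) ω = j}) =
        ENNReal.ofReal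
          ((∑ r1 ∈ Finset.range (L + 1), ∑ r2 ∈ (Finset.range (L + 1)).erase r1,
              (L.choose r1 : ℝ) * (L.choose r2 : ℝ) * h r1 r2) +
           ∑ r ∈ Finset.range (L + 1),
              (L.choose r : ℝ) * ((L.choose r : ℝ) - 1) * h r r) :=
  stmt4_general μ p hp0 hp1 L b hb hindep hdist A hA w hw
end

section
/- There exist real numbers C > 0 and δ with 0 < δ < 1 such that for all n ∈ ℤ and all integers k ≥ 1, i ≥ 1, j ≥ 1, |Pr[A_n = i, A_{n+k} = j] − Pr[A_n = i] · Pr[A_{n+k} = j]| < C · δ^{i+j}. -/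
/-!
On the event `A n = i` the blocks `n - 1, …, n - i + 1` all differ from block `n`; by independence
and uniformity this has probability `(1 - 2⁻ᴸ) ^ (i - 1)`. For any two events,
`|P(E ∩ F) - P(E) P(F)| ≤ √(P(E) P(F))`, since both `P(E ∩ F)` and `P(E) P(F)` are at most the
geometric mean of `P(E)` and `P(F)`. Hence the covariance is at most `δ ^ (i + j - 2)` with
`δ = √(1 - 2⁻ᴸ)`.
-/

open MeasureTheory ProbabilityTheory

namespace ProbabilityTheory

-- `sInf ∅ = 0`: the value is `0` on the null event that no earlier block matches block `n`.
noncomputable def recurrenceTime {Ω α : Type*} (b : ℤ → Ω → α) (n : ℤ) (ω : Ω) : ℕ :=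
  sInf {m : ℕ | 1 ≤ m ∧ b (n - m) ω = b n ω}

variable {Ω ι α : Type*} [MeasurableSpace Ω] {μ : Measure Ω} [IsProbabilityMeasure μ]
  [Fintype α] [MeasurableSpace α] [MeasurableSingletonClass α] {b : ι → Ω → α}

lemma iIndepFun.measure_forall_ne_eq_pow [DecidableEq ι] (hb : ∀ i, Measurable (b i))
    (hindep : iIndepFun b μ) {p : ENNReal} (hunif : ∀ i x, μ (b i ⁻¹' {x}) = p)
    {n : ι} {T : Finset ι} (hn : n ∉ T) :
    μ {ω | ∀ m ∈ T, b m ω ≠ b n ω} = (1 - p) ^ T.card := by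
  have hfiber (x : α) : μ (b n ⁻¹' {x} ∩ ⋂ m ∈ T, (b m ⁻¹' {x})ᶜ) = p * (1 - p) ^ T.card := by
    let s := Function.update (fun i => (b i ⁻¹' {x})ᶜ) n (b n ⁻¹' {x})
    have hsn : s n = b n ⁻¹' {x} := Function.update_self _ _ _
    have hsT : ∀ m ∈ T, s m = (b m ⁻¹' {x})ᶜ :=
      fun m hm => Function.update_of_ne (ne_of_mem_of_not_mem hm hn) _ _
    have hs : b n ⁻¹' {x} ∩ ⋂ m ∈ T, (b m ⁻¹' {x})ᶜ = ⋂ i ∈ insert n T, s i := by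
      rw [Finset.set_biInter_insert, hsn]
      exact congrArg _ (Set.iInter₂_congr fun m hm => (hsT m hm).symm)
    have hcompl (m : ι) : μ (b m ⁻¹' {x})ᶜ = 1 - p := by
      rw [measure_compl (hb m (measurableSet_singleton x)) (measure_ne_top μ _), measure_univ,
        hunif]
    rw [hs, hindep.meas_biInter, Finset.prod_insert hn, hsn, hunif,
      Finset.prod_congr rfl fun m hm => (congrArg μ (hsT m hm)).trans (hcompl m),
      Finset.prod_const]
    · intro i _
      by_cases h : i = n
      · exact ⟨{x}, measurableSet_singleton x, by simp [s, h]⟩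
      · exact ⟨{x}ᶜ, (measurableSet_singleton x).compl, by simp [s, h]⟩
  have hcard : (Fintype.card α : ENNReal) * p = 1 := by
    simpa [hunif] using sum_measure_preimage_singleton (μ := μ) Finset.univ
      fun x _ => hb n (measurableSet_singleton x)
  have hunion : {ω | ∀ m ∈ T, b m ω ≠ b n ω} = ⋃ x, b n ⁻¹' {x} ∩ ⋂ m ∈ T, (b m ⁻¹' {x})ᶜ := by
    ext ω; simp
  rw [hunion, measure_iUnion, tsum_fintype, Finset.sum_congr rfl fun x _ => hfiber x,
    Finset.sum_const, nsmul_eq_mul, ← mul_assoc, Finset.card_univ, hcard, one_mul]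
  · exact fun x y hxy => Set.disjoint_left.2 fun ω hx hy => hxy (hx.1.symm.trans hy.1)
  · exact fun x => (hb n (measurableSet_singleton x)).inter <|
      .biInter T.countable_toSet fun m _ => (hb m (measurableSet_singleton x)).compl

lemma measure_recurrenceTime_eq_le {b : ℤ → Ω → α} (hb : ∀ i, Measurable (b i))
    (hindep : iIndepFun b μ) {p : ENNReal} (hunif : ∀ i x, μ (b i ⁻¹' {x}) = p) (n : ℤ) (i : ℕ) :
    μ {ω | recurrenceTime b n ω = i} ≤ (1 - p) ^ (i - 1) := by
  have hcard : (Finset.Ioo (n - i) n).card = i - 1 := by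
    rw [Int.card_Ioo]; omega
  have hsub : {ω | recurrenceTime b n ω = i} ⊆
      {ω | ∀ m ∈ Finset.Ioo (n - i) n, b m ω ≠ b n ω} := by
    intro ω hω m hm hbm
    rw [Finset.mem_Ioo] at hm
    have hlt : (n - m).toNat < recurrenceTime b n ω := by rw [hω]; omega
    refine Nat.notMem_of_lt_sInf hlt ⟨by omega, ?_⟩
    rwa [Int.toNat_of_nonneg (by omega), sub_sub_cancel]
  calc μ {ω | recurrenceTime b n ω = i} ≤ μ {ω | ∀ m ∈ Finset.Ioo (n - i) n, b m ω ≠ b n ω} :=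
        measure_mono hsub
    _ = (1 - p) ^ (i - 1) := by
        rw [hindep.measure_forall_ne_eq_pow hb hunif (by simp), hcard]

lemma measureReal_recurrenceTime_eq_le {b : ℤ → Ω → α} (hb : ∀ i, Measurable (b i))
    (hindep : iIndepFun b μ) {p : ENNReal} (hunif : ∀ i x, μ (b i ⁻¹' {x}) = p) (n : ℤ) (i : ℕ) :
    μ.real {ω | recurrenceTime b n ω = i} ≤ (1 - p.toReal) ^ (i - 1) := by
  have hp : p ≤ 1 := by
    obtain ⟨ω⟩ := nonempty_of_isProbabilityMeasure μ
    exact hunif 0 (b 0 ω) ▸ prob_le_one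
  have h := ENNReal.toReal_mono (ENNReal.pow_ne_top (by simp))
    (measure_recurrenceTime_eq_le hb hindep hunif n i)
  rwa [ENNReal.toReal_pow, ENNReal.toReal_sub_of_le hp ENNReal.one_ne_top,
    ENNReal.toReal_one] at h

end ProbabilityTheory

namespace MeasureTheory

lemma abs_measureReal_inter_sub_mul_le_sqrt {Ω : Type*} [MeasurableSpace Ω] (μ : Measure Ω)
    [IsProbabilityMeasure μ] (s t : Set Ω) :
    |μ.real (s ∩ t) - μ.real s * μ.real t| ≤ √(μ.real s * μ.real t) := by
  have hs := measureReal_le_one (μ := μ) (s := s)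
  have ht := measureReal_le_one (μ := μ) (s := t)
  have hs₀ : 0 ≤ μ.real s := measureReal_nonneg
  have ht₀ : 0 ≤ μ.real t := measureReal_nonneg
  have hst₀ : 0 ≤ μ.real (s ∩ t) := measureReal_nonneg
  have hinter : μ.real (s ∩ t) ≤ √(μ.real s * μ.real t) := by
    rw [Real.le_sqrt hst₀ (by positivity)]
    nlinarith [measureReal_mono (μ := μ) (Set.inter_subset_left (s := s) (t := t)),
      measureReal_mono (μ := μ) (Set.inter_subset_right (s := s) (t := t))]
  have hprod : μ.real s * μ.real t ≤ √(μ.real s * μ.real t) := by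
    rw [Real.le_sqrt (by positivity) (by positivity)]
    nlinarith [mul_le_one₀ hs ht₀ ht, mul_nonneg hs₀ ht₀]
  rw [abs_sub_le_iff]
  constructor <;> nlinarith [mul_nonneg hs₀ ht₀]

end MeasureTheory

/-- There exist `C > 0` and `0 < δ < 1` such that for all `n : ℤ`
and integers `k ≥ 1`, `i ≥ 1`, `j ≥ 1`,
`|Pr[A n = i, A (n+k) = j] − Pr[A n = i] · Pr[A (n+k) = j]| < C · δ^(i+j)`. -/
theorem stmt8
    {Ω : Type*} [MeasurableSpace Ω] (μ : Measure Ω) [IsProbabilityMeasure μ]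
    (L : ℕ) (hL : 1 ≤ L)
    (b : ℤ → Ω → (Fin L → Bool)) (hb : ∀ n, Measurable (b n))
    (hindep : iIndepFun b μ)
    (hunif : ∀ (n : ℤ) (x : Fin L → Bool), μ (b n ⁻¹' {x}) = ((2 : ENNReal) ^ L)⁻¹)
    (A : ℤ → Ω → ℕ)
    (hA : ∀ n ω, A n ω = sInf {m : ℕ | 1 ≤ m ∧ b (n - (m : ℤ)) ω = b n ω}) :
    ∃ C : ℝ, 0 < C ∧ ∃ δ : ℝ, 0 < δ ∧ δ < 1 ∧
      ∀ (n : ℤ) (k i j : ℕ), 1 ≤ k → 1 ≤ i → 1 ≤ j →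
        |(μ ({ω | A n ω = i} ∩ {ω | A (n + (k : ℤ)) ω = j})).toReal -
            (μ {ω | A n ω = i}).toReal * (μ {ω | A (n + (k : ℤ)) ω = j}).toReal| <
          C * δ ^ (i + j) := by
  obtain rfl : A = recurrenceTime b := funext fun n => funext (hA n)
  have hinv : ((2 : ℝ) ^ L)⁻¹ < 1 := inv_lt_one_of_one_lt₀ (one_lt_pow₀ one_lt_two (by omega))
  set δ := √(1 - ((2 : ℝ) ^ L)⁻¹)
  have hδ : δ ^ 2 = 1 - ((2 : ℝ) ^ L)⁻¹ := Real.sq_sqrt (by linarith)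
  have hδ₀ : 0 < δ := Real.sqrt_pos.2 (by linarith)
  have hδ₁ : δ < 1 := (Real.sqrt_lt' one_pos).2 (by simp)
  have hmarg (n : ℤ) (i : ℕ) : μ.real {ω | recurrenceTime b n ω = i} ≤ (δ ^ 2) ^ (i - 1) := by
    simpa [hδ, ENNReal.toReal_inv] using measureReal_recurrenceTime_eq_le hb hindep hunif n i
  refine ⟨2 / δ ^ 2, by positivity, δ, hδ₀, hδ₁, fun n k i j _ hi hj => ?_⟩
  obtain ⟨i, rfl⟩ := Nat.exists_eq_add_of_le' hi
  obtain ⟨j, rfl⟩ := Nat.exists_eq_add_of_le' hj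
  simp only [← measureReal_def]
  calc _ ≤ √(μ.real {ω | recurrenceTime b n ω = i + 1} *
          μ.real {ω | recurrenceTime b (n + k) ω = j + 1}) :=
        abs_measureReal_inter_sub_mul_le_sqrt μ _ _
    _ ≤ √((δ ^ (i + j)) ^ 2) := Real.sqrt_le_sqrt <|
        (mul_le_mul (hmarg n (i + 1)) (hmarg _ (j + 1)) measureReal_nonneg
          (by positivity)).trans_eq (by simp only [add_tsub_cancel_right]; ring)
    _ = δ ^ (i + j) := Real.sqrt_sq (by positivity)
    _ < 2 / δ ^ 2 * δ ^ (i + 1 + (j + 1)) := by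
        rw [div_mul_eq_mul_div, lt_div_iff₀ (by positivity)]
        have hpos : 0 < δ ^ (i + j) * δ ^ 2 := by positivity
        linarith [show δ ^ (i + 1 + (j + 1)) = δ ^ (i + j) * δ ^ 2 by ring]
end

section
/- Each X_n = g(A_n) is square-integrable, and there exist real numbers C > 0 and δ with 0 < δ < 1 such that for every integer n ≥ 2, |Cov[X_1, X_n]| < C · δ^n. -/
/-!
`A_n` has a geometric tail: `A_n = m` forces the `m - 1` blocks preceding block `n` to differ
from `b_n`, which has probability `q ^ (m - 1)` with `q = 1 - 2⁻ᴸ`. Since `g` grows at most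
linearly, `g (A_n)` restricted to `{A_n ≥ N}` has second moment `O(δ ^ (2 N))` for some `δ < 1`.
For `n ≥ 2` split `X_n = Z + D` according to whether `A_n ≤ n - 2`. On that event `A_n` is read
off `b_2, …, b_n`, so `Z` is independent of `X_1`, a function of the blocks up to index `1`.
Hence `Cov[X_1, X_n] = Cov[X_1, D]`, and Cauchy–Schwarz bounds it by `‖X_1‖₂ ‖D‖₂ = O(δ ^ n)`.
-/

open MeasureTheory ProbabilityTheory
open scoped ENNReal

theorem Nat.sInf_setOf_le_and (P : ℕ → Prop) (M : ℕ) :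
    sInf {k | k ≤ M ∧ P k} = if sInf {k | P k} ≤ M then sInf {k | P k} else 0 := by
  split_ifs with hM
  · rcases Set.eq_empty_or_nonempty {k | P k} with hP | hP
    · rw [hP, Nat.sInf_empty]
      exact Nat.sInf_eq_zero.2 (Or.inr (Set.eq_empty_of_forall_notMem fun k hk => hP.subset hk.2))
    · exact IsLeast.csInf_eq ⟨⟨hM, Nat.sInf_mem hP⟩, fun j hj => Nat.sInf_le hj.2⟩
  · refine Nat.sInf_eq_zero.2 (Or.inr (Set.eq_empty_of_forall_notMem fun k hk => hM ?_))
    exact (Nat.sInf_le hk.2).trans hk.1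

theorem pow_sub_one_le_inv_mul_pow {q r : ℝ} (hq0 : 0 < q) (hq1 : q ≤ 1) (hqr : q ≤ r) (m : ℕ) :
    q ^ (m - 1) ≤ q⁻¹ * r ^ m := by
  rcases m with _ | m
  · simpa using (one_le_inv₀ hq0).2 hq1
  · rw [Nat.add_sub_cancel, le_inv_mul_iff₀ hq0, ← pow_succ']
    exact pow_le_pow_left₀ hq0.le hqr _

theorem one_sub_le_one_sub_div_four_pow_four {p : ℝ} (hp : p ≤ 8) : 1 - p ≤ (1 - p / 4) ^ 4 := by
  have := one_add_mul_le_pow (a := -(p / 4)) (by linarith) 4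
  push_cast at this
  linarith

theorem abs_harmonic_div_log_two_le (i : ℕ) :
    |1 / Real.log 2 * ∑ j ∈ Finset.Icc 1 (i - 1), (1 : ℝ) / j| ≤ 2 * i := by
  have hlog : 1 / Real.log 2 ≤ 2 := by
    rw [div_le_iff₀ (Real.log_pos one_lt_two)]
    linarith [Real.log_two_gt_d9]
  have hsum : ∑ j ∈ Finset.Icc 1 (i - 1), (1 : ℝ) / j ≤ i :=
    calc ∑ j ∈ Finset.Icc 1 (i - 1), (1 : ℝ) / j ≤ ∑ j ∈ Finset.Icc 1 (i - 1), (1 : ℝ) :=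
          Finset.sum_le_sum fun j hj => div_le_one_of_le₀
            (by exact_mod_cast (Finset.mem_Icc.1 hj).1) (Nat.cast_nonneg j)
      _ ≤ i := by simp
  rw [abs_of_nonneg (by positivity)]
  exact mul_le_mul hlog hsum (by positivity) zero_le_two

section Measurability

variable {Ω : Type*}

theorem measurable_sInf_setOf_nat {m : MeasurableSpace Ω} {P : ℕ → Ω → Prop}
    (hP : ∀ k, MeasurableSet {ω | P k ω}) : Measurable fun ω => sInf {k | P k ω} := by
  refine measurable_to_countable' fun k => ?_
  have hP' : ∀ k, Measurable (P k) := fun k => measurableSet_setOfPred.1 (hP k)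
  have hpre : (fun ω => sInf {k | P k ω}) ⁻¹' {k} =
      {ω | IsLeast {j | P j ω} k} ∪ {ω | k = 0 ∧ ∀ j, ¬ P j ω} := by
    ext ω
    simp only [Set.mem_preimage, Set.mem_singleton_iff, Set.mem_union, Set.mem_ofPred_eq]
    constructor
    · rintro rfl
      rcases Set.eq_empty_or_nonempty {j | P j ω} with h | h
      · exact Or.inr ⟨by simp [h], fun j hj => h.subset hj⟩
      · exact Or.inl ⟨Nat.sInf_mem h, fun j hj => Nat.sInf_le hj⟩
    · rintro (h | ⟨rfl, h⟩)
      · exact h.csInf_eq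
      · simp [h]
  rw [hpre]
  refine MeasurableSet.union (measurableSet_setOfPred.2 ?_) (measurableSet_setOfPred.2 ?_)
  · exact (hP' k).and (Measurable.forall fun j => (hP' j).imp measurable_const)
  · exact measurable_const.and (Measurable.forall fun j => (hP' j).not)

theorem measurable_sInf_setOf_and_eq {α : Type*} {m : MeasurableSpace Ω} [MeasurableSpace α]
    [MeasurableEq α] {b : ℤ → Ω → α} {n : ℤ} {Q : ℕ → Prop}
    (hb : ∀ k, Q k → Measurable[m] (b (n - k))) (hbn : Measurable[m] (b n)) :
    Measurable[m] fun ω => sInf {k : ℕ | Q k ∧ b (n - k) ω = b n ω} := by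
  refine measurable_sInf_setOf_nat fun k => ?_
  by_cases hk : Q k
  · simpa [hk] using measurableSet_eq_fun (hb k hk) hbn
  · simp [hk]

theorem measurable_iSup_comap_of_mem {ι : Type*} {β : ι → Type*} [∀ i, MeasurableSpace (β i)]
    {b : ∀ i, Ω → β i} {S : Set ι} {i : ι} (hi : i ∈ S) :
    Measurable[⨆ i ∈ S, MeasurableSpace.comap (b i) inferInstance] (b i) :=
  (comap_measurable (b i)).mono (le_iSup₂_of_le i hi le_rfl) le_rfl

end Measurability

namespace ProbabilityTheory.iIndepFun

variable {Ω ι : Type*} [MeasurableSpace Ω] {μ : Measure Ω}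

theorem indepFun_of_measurable_iSup {γ γ' : Type*} {β : ι → Type*}
    [∀ i, MeasurableSpace (β i)] [MeasurableSpace γ] [MeasurableSpace γ'] {b : ∀ i, Ω → β i}
    (hb : ∀ i, Measurable (b i)) (hind : iIndepFun b μ) {S T : Set ι} (hST : Disjoint S T)
    {f : Ω → γ} {h : Ω → γ'}
    (hf : Measurable[⨆ i ∈ S, MeasurableSpace.comap (b i) inferInstance] f)
    (hh : Measurable[⨆ i ∈ T, MeasurableSpace.comap (b i) inferInstance] h) :
    IndepFun f h μ := by
  rw [IndepFun_iff_Indep]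
  exact indep_of_indep_of_le (indep_iSup_of_disjoint (fun i => (hb i).comap_le)
    ((iIndepFun_iff_iIndep _ _ _).1 hind) hST) hf.comap_le hh.comap_le

theorem measure_forall_ne_eq {α : Type*} [MeasurableSpace α] [Fintype α]
    [MeasurableSingletonClass α] [IsProbabilityMeasure μ] {b : ι → Ω → α}
    (hb : ∀ i, Measurable (b i)) (hind : iIndepFun b μ)
    (hunif : ∀ i x, μ (b i ⁻¹' {x}) = (Fintype.card α : ℝ≥0∞)⁻¹) {n : ι} {S : Finset ι}
    (hn : n ∉ S) :
    μ {ω | ∀ j ∈ S, b j ω ≠ b n ω} = (1 - (Fintype.card α : ℝ≥0∞)⁻¹) ^ S.card := by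
  classical
  have : Nonempty Ω := nonempty_of_isProbabilityMeasure μ
  have : Nonempty α := ⟨b n (Classical.arbitrary Ω)⟩
  set p : ℝ≥0∞ := (Fintype.card α : ℝ≥0∞)⁻¹
  let fiber : α → Set Ω := fun x => ⋂ i ∈ insert n S, b i ⁻¹' (if i = n then {x} else {x}ᶜ)
  have hfiber_eq : ∀ x, fiber x = b n ⁻¹' {x} ∩ ⋂ j ∈ S, (b j ⁻¹' {x})ᶜ := fun x => by
    simp only [fiber, Finset.set_biInter_insert]
    congr 1
    refine Set.iInter₂_congr fun j hj => ?_
    rw [if_neg (ne_of_mem_of_not_mem hj hn), Set.preimage_compl]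
  have hfiber_meas : ∀ x, MeasurableSet (fiber x) := fun x =>
    Finset.measurableSet_biInter _ fun i _ => hb i (by split_ifs <;> simp)
  have hfiber : ∀ x, μ (fiber x) = p * (1 - p) ^ S.card := fun x => by
    rw [hind.measure_inter_preimage_eq_mul _ fun i _ => by split_ifs <;> simp,
      Finset.prod_insert hn, if_pos rfl, hunif]
    congr 1
    refine (Finset.prod_congr rfl fun j hj => ?_).trans (Finset.prod_const _)
    rw [if_neg (ne_of_mem_of_not_mem hj hn), Set.preimage_compl,
      prob_compl_eq_one_sub (hb j (measurableSet_singleton x)), hunif]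
  have hunion : {ω | ∀ j ∈ S, b j ω ≠ b n ω} = ⋃ x, fiber x := by
    ext ω
    simp [hfiber_eq]
  have hdisj : Pairwise (Function.onFun Disjoint fiber) := fun x y hxy => by
    simp only [Function.onFun, hfiber_eq]
    exact (Disjoint.preimage _ (Set.disjoint_singleton.2 hxy)).mono Set.inter_subset_left
      Set.inter_subset_left
  rw [hunion, measure_iUnion hdisj hfiber_meas, tsum_fintype,
    Finset.sum_congr rfl fun x _ => hfiber x, Finset.sum_const, Finset.card_univ, nsmul_eq_mul,
    ← mul_assoc, ENNReal.mul_inv_cancel (by simp [Fintype.card_ne_zero]) (by simp), one_mul]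

end ProbabilityTheory.iIndepFun

section Moments

variable {Ω : Type*} [MeasurableSpace Ω] {μ : Measure Ω} {T : Ω → ℕ} {F w : ℕ → ℝ}

theorem lintegral_ofReal_sq_comp_le (hT : Measurable T) (hw0 : ∀ m, 0 ≤ w m)
    (hw : ∀ m, μ (T ⁻¹' {m}) ≤ ENNReal.ofReal (w m)) (hsum : Summable fun m => F m ^ 2 * w m) :
    ∫⁻ ω, ENNReal.ofReal (F (T ω) ^ 2) ∂μ ≤ ENNReal.ofReal (∑' m, F m ^ 2 * w m) :=
  calc ∫⁻ ω, ENNReal.ofReal (F (T ω) ^ 2) ∂μ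
      = ∑' m, ENNReal.ofReal (F m ^ 2) * μ (T ⁻¹' {m}) := by
        rw [← lintegral_map (f := fun m => ENNReal.ofReal (F m ^ 2)) measurable_from_nat hT,
          lintegral_countable']
        simp_rw [Measure.map_apply hT (measurableSet_singleton _)]
    _ ≤ ∑' m, ENNReal.ofReal (F m ^ 2 * w m) := ENNReal.tsum_le_tsum fun m => by
        rw [ENNReal.ofReal_mul (sq_nonneg _)]
        exact mul_le_mul_right (hw m) _
    _ = ENNReal.ofReal (∑' m, F m ^ 2 * w m) :=
        (ENNReal.ofReal_tsum_of_nonneg (fun m => mul_nonneg (sq_nonneg _) (hw0 m)) hsum).symm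

theorem memLp_two_comp_of_summable (hT : Measurable T) (hw0 : ∀ m, 0 ≤ w m)
    (hw : ∀ m, μ (T ⁻¹' {m}) ≤ ENNReal.ofReal (w m)) (hsum : Summable fun m => F m ^ 2 * w m) :
    MemLp (fun ω => F (T ω)) 2 μ := by
  have hmeas : Measurable fun ω => F (T ω) := measurable_from_nat.comp hT
  refine (memLp_two_iff_integrable_sq hmeas.aestronglyMeasurable).2
    ⟨(hmeas.pow_const 2).aestronglyMeasurable, ?_⟩
  rw [hasFiniteIntegral_iff_ofReal (ae_of_all _ fun ω => sq_nonneg _)]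
  exact (lintegral_ofReal_sq_comp_le hT hw0 hw hsum).trans_lt ENNReal.ofReal_lt_top

theorem integral_sq_comp_le_tsum (hT : Measurable T) (hw0 : ∀ m, 0 ≤ w m)
    (hw : ∀ m, μ (T ⁻¹' {m}) ≤ ENNReal.ofReal (w m)) (hsum : Summable fun m => F m ^ 2 * w m) :
    ∫ ω, F (T ω) ^ 2 ∂μ ≤ ∑' m, F m ^ 2 * w m := by
  have hmeas : Measurable fun ω => F (T ω) ^ 2 := (measurable_from_nat.comp hT).pow_const 2
  rw [integral_eq_lintegral_of_nonneg_ae (ae_of_all _ fun ω => sq_nonneg _)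
    hmeas.aestronglyMeasurable]
  exact ENNReal.toReal_le_of_le_ofReal (tsum_nonneg fun m => mul_nonneg (sq_nonneg _) (hw0 m))
    (lintegral_ofReal_sq_comp_le hT hw0 hw hsum)

theorem sq_mul_geometric_le {a c δ : ℝ} {N : ℕ} (hF : ∀ m, |F m| ≤ a * m)
    (hFN : ∀ m < N, F m = 0) (hc : 0 ≤ c) (hδ0 : 0 ≤ δ) (hδ1 : δ ≤ 1) (m : ℕ) :
    F m ^ 2 * (c * (δ ^ 4) ^ m) ≤ a ^ 2 * c * δ ^ (2 * N) * ((m : ℝ) ^ 2 * (δ ^ 2) ^ m) := by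
  rcases lt_or_ge m N with hm | hm
  · rw [hFN m hm]
    have : 0 ≤ a ^ 2 * c * δ ^ (2 * N) * ((m : ℝ) ^ 2 * (δ ^ 2) ^ m) := by positivity
    simpa using this
  have hFm : F m ^ 2 ≤ a ^ 2 * (m : ℝ) ^ 2 := by
    rw [← mul_pow, ← sq_abs]
    exact pow_le_pow_left₀ (abs_nonneg _) (hF m) 2
  have hδm : (δ ^ 2) ^ m ≤ δ ^ (2 * N) := by
    rw [pow_mul]
    exact pow_le_pow_of_le_one (by positivity) (pow_le_one₀ hδ0 hδ1) hm
  have hδ4 : (δ ^ 4) ^ m = (δ ^ 2) ^ m * (δ ^ 2) ^ m := by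
    rw [← mul_pow, ← pow_add]
  calc F m ^ 2 * (c * (δ ^ 4) ^ m)
      ≤ a ^ 2 * (m : ℝ) ^ 2 * (c * ((δ ^ 2) ^ m * δ ^ (2 * N))) := by
        rw [hδ4]; gcongr
    _ = a ^ 2 * c * δ ^ (2 * N) * ((m : ℝ) ^ 2 * (δ ^ 2) ^ m) := by ring

theorem memLp_two_comp_and_integral_sq_le_of_geometric (hT : Measurable T) {a c δ : ℝ} {N : ℕ}
    (hF : ∀ m, |F m| ≤ a * m) (hFN : ∀ m < N, F m = 0) (hc : 0 ≤ c) (hδ0 : 0 ≤ δ) (hδ1 : δ < 1)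
    (hT_le : ∀ m, μ (T ⁻¹' {m}) ≤ ENNReal.ofReal (c * (δ ^ 4) ^ m)) :
    MemLp (fun ω => F (T ω)) 2 μ ∧
      ∫ ω, F (T ω) ^ 2 ∂μ ≤ a ^ 2 * c * (∑' m : ℕ, (m : ℝ) ^ 2 * (δ ^ 2) ^ m) * δ ^ (2 * N) := by
  have hw0 : ∀ m, 0 ≤ c * (δ ^ 4) ^ m := fun m => by positivity
  have hgeom : Summable fun m : ℕ => (m : ℝ) ^ 2 * (δ ^ 2) ^ m :=
    summable_pow_mul_geometric_of_norm_lt_one 2 (by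
      rw [Real.norm_eq_abs, abs_of_nonneg (by positivity)]
      exact pow_lt_one₀ hδ0 hδ1 two_ne_zero)
  have hle := sq_mul_geometric_le hF hFN hc hδ0 hδ1.le
  have hsum : Summable fun m => F m ^ 2 * (c * (δ ^ 4) ^ m) :=
    (hgeom.mul_left _).of_nonneg_of_le (fun m => mul_nonneg (sq_nonneg _) (hw0 m)) hle
  refine ⟨memLp_two_comp_of_summable hT hw0 hT_le hsum, ?_⟩
  calc ∫ ω, F (T ω) ^ 2 ∂μ ≤ ∑' m, F m ^ 2 * (c * (δ ^ 4) ^ m) :=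
        integral_sq_comp_le_tsum hT hw0 hT_le hsum
    _ ≤ ∑' m : ℕ, a ^ 2 * c * δ ^ (2 * N) * ((m : ℝ) ^ 2 * (δ ^ 2) ^ m) :=
        hsum.tsum_le_tsum hle (hgeom.mul_left _)
    _ = a ^ 2 * c * (∑' m : ℕ, (m : ℝ) ^ 2 * (δ ^ 2) ^ m) * δ ^ (2 * N) := by
        rw [tsum_mul_left]; ring

end Moments

section CauchySchwarz

variable {Ω : Type*} [MeasurableSpace Ω] {μ : Measure Ω}

theorem abs_integral_mul_le_sqrt_mul_sqrt {f g : Ω → ℝ} (hf : MemLp f 2 μ) (hg : MemLp g 2 μ) :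
    |∫ ω, f ω * g ω ∂μ| ≤ √(∫ ω, f ω ^ 2 ∂μ) * √(∫ ω, g ω ^ 2 ∂μ) := by
  have hholder := integral_mul_norm_le_Lp_mul_Lq (μ := μ) Real.HolderConjugate.two_two
    (by simpa using hf) (by simpa using hg)
  simp only [Real.norm_eq_abs, Real.rpow_two, sq_abs, ← Real.sqrt_eq_rpow] at hholder
  calc |∫ ω, f ω * g ω ∂μ| ≤ ∫ ω, |f ω| * |g ω| ∂μ := by
        simpa only [abs_mul] using abs_integral_le_integral_abs (f := fun ω => f ω * g ω)
    _ ≤ √(∫ ω, f ω ^ 2 ∂μ) * √(∫ ω, g ω ^ 2 ∂μ) := hholder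

variable [IsProbabilityMeasure μ]

theorem abs_covariance_le_sqrt_mul_sqrt {X Y : Ω → ℝ} (hX : MemLp X 2 μ) (hY : MemLp Y 2 μ) :
    |cov[X, Y; μ]| ≤ √(∫ ω, X ω ^ 2 ∂μ) * √(∫ ω, Y ω ^ 2 ∂μ) :=
  calc |cov[X, Y; μ]| ≤ √Var[X; μ] * √Var[Y; μ] := by
        rw [covariance, variance_eq_integral hX.aemeasurable, variance_eq_integral hY.aemeasurable]
        exact abs_integral_mul_le_sqrt_mul_sqrt (hX.sub (memLp_const _)) (hY.sub (memLp_const _))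
    _ ≤ √(∫ ω, X ω ^ 2 ∂μ) * √(∫ ω, Y ω ^ 2 ∂μ) := by
        gcongr
        · exact variance_le_expectation_sq hX.aestronglyMeasurable
        · exact variance_le_expectation_sq hY.aestronglyMeasurable

theorem abs_covariance_add_le_of_indepFun {X Z D : Ω → ℝ} (hX : MemLp X 2 μ)
    (hZ : MemLp Z 2 μ) (hD : MemLp D 2 μ) (hind : IndepFun X Z μ) :
    |cov[X, Z + D; μ]| ≤ √(∫ ω, X ω ^ 2 ∂μ) * √(∫ ω, D ω ^ 2 ∂μ) := by
  rw [covariance_add_right hX hZ hD, hind.covariance_eq_zero hX hZ, zero_add]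
  exact abs_covariance_le_sqrt_mul_sqrt hX hD

end CauchySchwarz

/-- `sInf ∅ = 0`, so `firstRepeat b n = 0` when no earlier block equals `b n`. -/
noncomputable def firstRepeat {α : Type*} (b : ℤ → α) (n : ℤ) : ℕ :=
  sInf {k : ℕ | 1 ≤ k ∧ b (n - k) = b n}

section FirstRepeat

variable {Ω α : Type*} [MeasurableSpace Ω] [MeasurableSpace α] {μ : Measure Ω} {b : ℤ → Ω → α}

theorem measure_firstRepeat_eq_le [Fintype α] [MeasurableSingletonClass α]
    [IsProbabilityMeasure μ] (hb : ∀ i, Measurable (b i)) (hind : iIndepFun b μ)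
    (hunif : ∀ i x, μ (b i ⁻¹' {x}) = (Fintype.card α : ℝ≥0∞)⁻¹) (n : ℤ) (m : ℕ) :
    μ {ω | firstRepeat (b · ω) n = m} ≤ (1 - (Fintype.card α : ℝ≥0∞)⁻¹) ^ (m - 1) := by
  classical
  set S : Finset ℤ := (Finset.Icc 1 (m - 1)).image fun k : ℕ => n - k
  have hnS : n ∉ S := by simp [S]
  have hS : S.card = m - 1 := by
    rw [Finset.card_image_of_injective _ fun k l h => by simpa using h, Nat.card_Icc,
      Nat.add_sub_cancel]
  calc μ {ω | firstRepeat (b · ω) n = m} ≤ μ {ω | ∀ j ∈ S, b j ω ≠ b n ω} := by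
        refine measure_mono fun ω hω j hj hrep => ?_
        obtain ⟨k, hk, rfl⟩ := Finset.mem_image.1 hj
        have hkm : k < firstRepeat (b · ω) n := by
          rw [show firstRepeat (b · ω) n = m from hω]
          have := Finset.mem_Icc.1 hk
          omega
        exact Nat.notMem_of_lt_sInf hkm ⟨(Finset.mem_Icc.1 hk).1, hrep⟩
    _ = (1 - (Fintype.card α : ℝ≥0∞)⁻¹) ^ (m - 1) := by
        rw [hind.measure_forall_ne_eq hb hunif hnS, hS]

theorem exists_integral_sq_firstRepeat_le [Fintype α] [MeasurableSingletonClass α]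
    [IsProbabilityMeasure μ] (hcard : 1 < Fintype.card α) (hb : ∀ i, Measurable (b i))
    (hind : iIndepFun b μ) (hunif : ∀ i x, μ (b i ⁻¹' {x}) = (Fintype.card α : ℝ≥0∞)⁻¹)
    (a : ℝ) :
    ∃ K δ : ℝ, 0 ≤ K ∧ 0 < δ ∧ δ < 1 ∧ ∀ (n : ℤ) (F : ℕ → ℝ) (N : ℕ),
      (∀ m, |F m| ≤ a * m) → (∀ m < N, F m = 0) →
        MemLp (fun ω => F (firstRepeat (b · ω) n)) 2 μ ∧
          ∫ ω, F (firstRepeat (b · ω) n) ^ 2 ∂μ ≤ K * δ ^ (2 * N) := by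
  set p : ℝ := (Fintype.card α : ℝ)⁻¹
  have hp0 : 0 < p := by positivity
  have hp1 : p < 1 := inv_lt_one_of_one_lt₀ (by exact_mod_cast hcard)
  set q := 1 - p with hq
  set δ := 1 - p / 4 with hδ
  have hq0 : 0 < q := by linarith
  have hδ0 : 0 < δ := by linarith
  have hδ1 : δ < 1 := by linarith
  have hdist : ∀ n m, μ ((fun ω => firstRepeat (b · ω) n) ⁻¹' {m}) ≤
      ENNReal.ofReal (q⁻¹ * (δ ^ 4) ^ m) := fun n m =>
    calc _ ≤ (1 - (Fintype.card α : ℝ≥0∞)⁻¹) ^ (m - 1) :=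
          measure_firstRepeat_eq_le hb hind hunif n m
      _ = ENNReal.ofReal (q ^ (m - 1)) := by
          rw [ENNReal.ofReal_pow hq0.le, ENNReal.ofReal_sub _ hp0.le, ENNReal.ofReal_one,
            ENNReal.ofReal_inv_of_pos (by positivity), ENNReal.ofReal_natCast]
      _ ≤ ENNReal.ofReal (q⁻¹ * (δ ^ 4) ^ m) := ENNReal.ofReal_le_ofReal
          (pow_sub_one_le_inv_mul_pow hq0 (by linarith)
            (one_sub_le_one_sub_div_four_pow_four (by linarith)) m)
  refine ⟨a ^ 2 * q⁻¹ * ∑' m : ℕ, (m : ℝ) ^ 2 * (δ ^ 2) ^ m, δ, by positivity, hδ0, hδ1,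
    fun n F N hF hFN => ?_⟩
  exact memLp_two_comp_and_integral_sq_le_of_geometric
    (measurable_sInf_setOf_and_eq (fun k _ => hb _) (hb n)) hF hFN (by positivity) hδ0.le hδ1
    (hdist n)

theorem ProbabilityTheory.iIndepFun.indepFun_firstRepeat_of_lt [MeasurableEq α]
    (hb : ∀ i, Measurable (b i)) (hind : iIndepFun b μ) {n₁ n : ℤ} {M : ℕ} (hlt : n₁ < n - M)
    (f h : ℕ → ℝ) (hh : h 0 = 0) :
    IndepFun (fun ω => f (firstRepeat (b · ω) n₁))
      (fun ω => if firstRepeat (b · ω) n ≤ M then h (firstRepeat (b · ω) n) else 0) μ := by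
  have htrunc : (fun ω => if firstRepeat (b · ω) n ≤ M then h (firstRepeat (b · ω) n) else 0) =
      fun ω => h (sInf {k : ℕ | (k ≤ M ∧ 1 ≤ k) ∧ b (n - k) ω = b n ω}) := by
    funext ω
    simp_rw [and_assoc]
    rw [Nat.sInf_setOf_le_and, apply_ite h, hh]
    rfl
  rw [htrunc]
  refine hind.indepFun_of_measurable_iSup hb (S := Set.Iic n₁) (T := Set.Icc (n - M) n)
    (Set.disjoint_left.2 fun i hi hi' => by simp only [Set.mem_Iic, Set.mem_Icc] at hi hi'; omega)
    (measurable_from_nat.comp ?_) (measurable_from_nat.comp ?_)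
  · exact measurable_sInf_setOf_and_eq (fun k _ => measurable_iSup_comap_of_mem (by simp))
      (measurable_iSup_comap_of_mem (by simp))
  · refine measurable_sInf_setOf_and_eq (fun k hk => measurable_iSup_comap_of_mem ?_)
      (measurable_iSup_comap_of_mem (by simp))
    simp only [Set.mem_Icc]
    omega

theorem exists_abs_covariance_firstRepeat_lt [Fintype α] [MeasurableSingletonClass α]
    [IsProbabilityMeasure μ] (hcard : 1 < Fintype.card α) (hb : ∀ i, Measurable (b i))
    (hind : iIndepFun b μ) (hunif : ∀ i x, μ (b i ⁻¹' {x}) = (Fintype.card α : ℝ≥0∞)⁻¹)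
    {f : ℕ → ℝ} {a : ℝ} (hf : ∀ m, |f m| ≤ a * m) :
    (∀ n, MemLp (fun ω => f (firstRepeat (b · ω) n)) 2 μ) ∧
      ∃ C, 0 < C ∧ ∃ δ, 0 < δ ∧ δ < 1 ∧ ∀ n : ℕ, 2 ≤ n →
        |cov[fun ω => f (firstRepeat (b · ω) 1), fun ω => f (firstRepeat (b · ω) n); μ]| <
          C * δ ^ n := by
  obtain ⟨K, δ, hK, hδ0, hδ1, hmoment⟩ := exists_integral_sq_firstRepeat_le hcard hb hind hunif a
  have hX := fun n => (hmoment n f 0 hf (by simp)).1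
  have hf0 : f 0 = 0 := abs_nonpos_iff.1 (by simpa using hf 0)
  have hf_if : ∀ (c : ℕ → Prop) [DecidablePred c] m, |if c m then f m else 0| ≤ a * m :=
    fun c _ m => by split_ifs <;> simp [hf, (abs_nonneg _).trans (hf m)]
  refine ⟨hX, K / δ + 1, by positivity, δ, hδ0, hδ1, fun n hn => ?_⟩
  set low : ℕ → ℝ := fun m => if m ≤ n - 2 then f m else 0
  set high : ℕ → ℝ := fun m => if n - 1 ≤ m then f m else 0
  have hsplit : (fun ω => f (firstRepeat (b · ω) n)) =
      (fun ω => low (firstRepeat (b · ω) n)) + fun ω => high (firstRepeat (b · ω) n) := by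
    funext ω
    simp only [Pi.add_apply, low, high]
    split_ifs <;> first | omega | simp
  have hlow := (hmoment n low 0 (hf_if _) (by simp)).1
  have hhigh := hmoment n high (n - 1) (hf_if _) fun m hm => if_neg (by omega)
  have hind_low := hind.indepFun_firstRepeat_of_lt hb (n₁ := 1) (n := n) (M := n - 2) (by omega)
    f f hf0
  rw [hsplit]
  calc _ ≤ √(∫ ω, f (firstRepeat (b · ω) 1) ^ 2 ∂μ) * √(∫ ω, high (firstRepeat (b · ω) n) ^ 2 ∂μ) :=
        abs_covariance_add_le_of_indepFun (hX 1) hlow hhigh.1 hind_low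
    _ ≤ √K * √(K * δ ^ (2 * (n - 1))) := by
        gcongr
        · simpa using (hmoment 1 f 0 hf (by simp)).2
        · exact hhigh.2
    _ = K / δ * δ ^ n := by
        rw [Real.sqrt_mul hK, pow_mul', Real.sqrt_sq (by positivity), ← mul_assoc,
          Real.mul_self_sqrt hK, div_mul_eq_mul_div, eq_div_iff hδ0.ne', mul_assoc, ← pow_succ,
          Nat.sub_add_cancel (by omega)]
    _ < (K / δ + 1) * δ ^ n := by nlinarith [pow_pos hδ0 n]

end FirstRepeat

/-- Each `X n = g (A n)` is square-integrable, and there exist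
`C > 0` and `0 < δ < 1` such that for every integer `n ≥ 2`,
`|Cov[X 1, X n]| < C · δ^n`, where
`Cov[X 1, X n] = E[X 1 · X n] − E[X 1] · E[X n]`. -/
theorem stmt10
    {Ω : Type*} [MeasurableSpace Ω] (μ : Measure Ω) [IsProbabilityMeasure μ]
    (L : ℕ) (hL : 1 ≤ L)
    (b : ℤ → Ω → (Fin L → Bool)) (hb : ∀ n, Measurable (b n))
    (hindep : iIndepFun b μ)
    (hunif : ∀ (n : ℤ) (x : Fin L → Bool), μ (b n ⁻¹' {x}) = ((2 : ENNReal) ^ L)⁻¹)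
    (A : ℤ → Ω → ℕ)
    (hA : ∀ n ω, A n ω = sInf {m : ℕ | 1 ≤ m ∧ b (n - (m : ℤ)) ω = b n ω})
    (g : ℕ → ℝ)
    (hg : ∀ i : ℕ, g i = (1 / Real.log 2) * ∑ j ∈ Finset.Icc 1 (i - 1), (1 : ℝ) / j)
    (X : ℤ → Ω → ℝ) (hX : ∀ n ω, X n ω = g (A n ω)) :
    (∀ n : ℤ, MemLp (X n) 2 μ) ∧
    (∃ C : ℝ, 0 < C ∧ ∃ δ : ℝ, 0 < δ ∧ δ < 1 ∧
      ∀ n : ℕ, 2 ≤ n →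
        |(∫ ω, X 1 ω * X (n : ℤ) ω ∂μ) -
            (∫ ω, X 1 ω ∂μ) * (∫ ω, X (n : ℤ) ω ∂μ)| < C * δ ^ n) := by
  obtain rfl : X = fun n ω => g (A n ω) := funext₂ hX
  obtain rfl : A = fun n ω => firstRepeat (b · ω) n := funext₂ hA
  have hcard : 1 < Fintype.card (Fin L → Bool) := by
    simpa using Nat.one_lt_two_pow (by omega : L ≠ 0)
  obtain ⟨hX2, C, hC, δ, hδ0, hδ1, hcov⟩ := exists_abs_covariance_firstRepeat_lt hcard hb hindep
    (by simpa using hunif) (f := g) (a := 2) fun m => hg m ▸ abs_harmonic_div_log_two_le m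
  refine ⟨hX2, C, hC, δ, hδ0, hδ1, fun n hn => ?_⟩
  simpa [covariance_eq_sub (hX2 1) (hX2 n)] using hcov n hn
end
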